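/- arXiv:2505.16185 — 2 statements merged into one kernel-verified Lean document; each statement's English description precedes it below -/
import Mathlib

section
/- Define formulas of 2-variable counting logic with counting rank at most t by: φ_0(x) = (x=x); φ_{t(l+1)}(x) = ∃^{≥t} y ((y<x) ∧ φ_{tl}(y)); and for 0 < p < t, φ_{tl+p}(x) = ∃^{≥p} y ((y<x) ∧ φ_{tl}(y)). Then in any linear order, an element a satisfies φ_j(x) if and only if there are at least j elements strictly below a; consequently, for n < m the sentence φ = ¬∃x φ_{n+1}(x) satisfies A_n ⊨ φ and A_m ⊨ ¬φ. -/
/-- Terms over the linear-order signature `{min, max, <, succ}`. -/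
inductive LTerm : Type
  | min : LTerm
  | max : LTerm
  | var : ℕ → LTerm

/-- Formulas of counting logic over the signature `{min, max, <, succ}`:
first-order logic extended with the counting quantifiers `∃^{≥k} x_j` and `∀^{≥k} x_j`. -/
inductive CFormula : Type
  | eq : LTerm → LTerm → CFormula
  | lt : LTerm → LTerm → CFormula
  | succ : LTerm → LTerm → CFormula
  | not : CFormula → CFormula
  | or : CFormula → CFormula → CFormula
  | and : CFormula → CFormula → CFormula
  | exCnt : ℕ → ℕ → CFormula → CFormula    -- `exCnt k j ψ` is `∃^{≥k} x_j ψ`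
  | allCnt : ℕ → ℕ → CFormula → CFormula   -- `allCnt k j ψ` is `∀^{≥k} x_j ψ = ¬∃^{≥k} x_j ¬ψ`

/-- All variables occurring in a term have index `< m`. -/
def LTerm.varsLT (m : ℕ) : LTerm → Prop
  | .var j => j < m
  | _ => True

namespace CFormula

/-- Formula size. -/
def size : CFormula → ℕ
  | eq _ _ => 1
  | lt _ _ => 1
  | succ _ _ => 1
  | not ψ => ψ.size + 1
  | or ψ θ => ψ.size + θ.size
  | and ψ θ => ψ.size + θ.size
  | exCnt _ _ ψ => ψ.size + 1
  | allCnt _ _ ψ => ψ.size + 1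

/-- Counting rank: the maximum counting rank of the quantifiers of the formula. -/
def crank : CFormula → ℕ
  | eq _ _ => 0
  | lt _ _ => 0
  | succ _ _ => 0
  | not ψ => ψ.crank
  | or ψ θ => max ψ.crank θ.crank
  | and ψ θ => max ψ.crank θ.crank
  | exCnt k _ ψ => max k ψ.crank
  | allCnt k _ ψ => max k ψ.crank

/-- Quantifier rank: maximal nesting depth of quantifiers. -/
def qrank : CFormula → ℕ
  | eq _ _ => 0
  | lt _ _ => 0
  | succ _ _ => 0
  | not ψ => ψ.qrank
  | or ψ θ => max ψ.qrank θ.qrank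
  | and ψ θ => max ψ.qrank θ.qrank
  | exCnt _ _ ψ => ψ.qrank + 1
  | allCnt _ _ ψ => ψ.qrank + 1

/-- The formula uses only the variables `x_0, …, x_{m-1}`. -/
def varsLT (m : ℕ) : CFormula → Prop
  | eq t t' => t.varsLT m ∧ t'.varsLT m
  | lt t t' => t.varsLT m ∧ t'.varsLT m
  | succ t t' => t.varsLT m ∧ t'.varsLT m
  | not ψ => ψ.varsLT m
  | or ψ θ => ψ.varsLT m ∧ θ.varsLT m
  | and ψ θ => ψ.varsLT m ∧ θ.varsLT m
  | exCnt _ j ψ => j < m ∧ ψ.varsLT m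
  | allCnt _ j ψ => j < m ∧ ψ.varsLT m

/-- Atomic formulas. -/
def IsAtomic : CFormula → Prop
  | eq _ _ => True
  | lt _ _ => True
  | succ _ _ => True
  | _ => False

end CFormula

/-- A relational structure over the signature `{min, max, <, succ}`. -/
structure LOStruct : Type 1 where
  carrier : Type
  lt : carrier → carrier → Prop
  succ : carrier → carrier → Prop
  bot : carrier
  top : carrier

/-- Value of a term in a structure under a variable assignment. -/
def LTerm.val (S : LOStruct) (α : ℕ → S.carrier) : LTerm → S.carrier
  | .min => S.bot
  | .max => S.top
  | .var j => α j

/-- Satisfaction of a counting-logic formula in a structure under an assignment.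
`∃^{≥k} x_j ψ` holds iff at least `k` distinct values for `x_j` satisfy `ψ`. -/
def Sat (S : LOStruct) : (ℕ → S.carrier) → CFormula → Prop
  | α, .eq t t' => t.val S α = t'.val S α
  | α, .lt t t' => S.lt (t.val S α) (t'.val S α)
  | α, .succ t t' => S.succ (t.val S α) (t'.val S α)
  | α, .not ψ => ¬ Sat S α ψ
  | α, .or ψ θ => Sat S α ψ ∨ Sat S α θ
  | α, .and ψ θ => Sat S α ψ ∧ Sat S α θ
  | α, .exCnt k j ψ =>
      ∃ f : Fin k → S.carrier, Function.Injective f ∧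
        ∀ i, Sat S (Function.update α j (f i)) ψ
  | α, .allCnt k j ψ =>
      ¬ ∃ f : Fin k → S.carrier, Function.Injective f ∧
        ∀ i, ¬ Sat S (Function.update α j (f i)) ψ

/-- The linear order `A_n = ({0,…,n}, <)` with `min = 0`, `max = n` and the successor relation. -/
def AStruct (n : ℕ) : LOStruct where
  carrier := Fin (n + 1)
  lt := fun a b => a < b
  succ := fun a b => (a : ℕ) + 1 = (b : ℕ)
  bot := 0
  top := Fin.last n

/-- The family of formulas `φ_j` of 2-variable counting logic (variables `x_v` and `x_{1-v}`,
with `v ∈ {0,1}`; `x = x_0`, `y = x_1`):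
`φ_0(x) = (x = x)`; `φ_{t(l+1)}(x) = ∃^{≥t} y ((y < x) ∧ φ_{tl}(y))`; and for `0 < p < t`,
`φ_{tl+p}(x) = ∃^{≥p} y ((y < x) ∧ φ_{tl}(y))`.  (For `j ≥ 1`, writing `l = (j-1)/t`,
the counting rank used is `p = j - t*l ∈ {1,…,t}` and the recursive call is at `t*l`.) -/
def phiLB (t : ℕ) : ℕ → ℕ → CFormula
  | 0, v => CFormula.eq (LTerm.var v) (LTerm.var v)
  | j + 1, v =>
      CFormula.exCnt (j + 1 - t * (j / t)) (1 - v)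
        (CFormula.and (CFormula.lt (LTerm.var (1 - v)) (LTerm.var v))
          (phiLB t (t * (j / t)) (1 - v)))
  decreasing_by
    have h : j / t * t ≤ j := Nat.div_mul_le_self j t
    calc t * (j / t) = j / t * t := Nat.mul_comm _ _
      _ ≤ j := h
      _ < j + 1 := Nat.lt_succ_self j

/-! The witnesses `y < x` of `(y < x) ∧ φ_{tl}(y)` in `A_N` are exactly `tl, …, x - 1`, so there
are at least `p` of them iff `x ≥ tl + p`; by induction on `j`, `φ_j(x)` holds iff `x ≥ j`.
The sentence `¬∃x φ_{n+1}(x)` thus says that there is no element `n + 1`. -/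

open Finset

theorem exists_injective_fin_forall_mem_iff {β : Type*} (s : Finset β) (k : ℕ) :
    (∃ f : Fin k → β, Function.Injective f ∧ ∀ i, f i ∈ s) ↔ k ≤ #s := by
  constructor
  · rintro ⟨f, hf, hs⟩
    simpa using card_le_card_of_injOn (s := univ) f (fun i _ => hs i) hf.injOn
  · intro hk
    obtain ⟨f, hf⟩ := Function.Embedding.exists_of_card_le_finset (α := Fin k) (by simpa)
    exact ⟨f, f.injective, fun i => hf ⟨i, rfl⟩⟩

theorem sat_exCnt_iff_le_card {S : LOStruct} {α : ℕ → S.carrier} {k j : ℕ} {ψ : CFormula}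
    (s : Finset S.carrier) (hs : ∀ c, Sat S (Function.update α j c) ψ ↔ c ∈ s) :
    Sat S α (.exCnt k j ψ) ↔ k ≤ #s := by
  simp only [Sat, hs]
  exact exists_injective_fin_forall_mem_iff s k

theorem sat_exCnt_one_iff {S : LOStruct} {α : ℕ → S.carrier} {j : ℕ} {ψ : CFormula} :
    Sat S α (.exCnt 1 j ψ) ↔ ∃ c, Sat S (Function.update α j c) ψ :=
  ⟨fun ⟨f, _, hf⟩ => ⟨f 0, hf 0⟩,
    fun ⟨c, hc⟩ => ⟨fun _ => c, fun _ _ _ => Subsingleton.elim _ _, fun _ => hc⟩⟩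

-- `α` ranges over `(AStruct N).carrier` rather than the defeq `Fin (N + 1)` so that the
-- `Function.update`s produced by `Sat` can be rewritten.
theorem sat_phiLB_iff (t : ℕ) {N j v : ℕ} (hv : v < 2) (α : ℕ → (AStruct N).carrier) :
    Sat (AStruct N) α (phiLB t j v) ↔ j ≤ Fin.val (α v) := by
  induction j using Nat.strong_induction_on generalizing v α with
  | _ j IH =>
  cases j with
  | zero => simp [phiLB, Sat]
  | succ j =>
    have hb : t * (j / t) ≤ j := Nat.mul_div_le j t
    have hvne : v ≠ 1 - v := by omega
    let below : Finset (AStruct N).carrier := (Ico (t * (j / t)) (Fin.val (α v))).attachFin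
      fun _ h => (mem_Ico.1 h).2.trans (Fin.isLt (α v))
    have card_below : #below = Fin.val (α v) - t * (j / t) :=
      (card_attachFin _ _).trans (Nat.card_Ico _ _)
    rw [phiLB, sat_exCnt_iff_le_card below, card_below]
    · omega
    · intro c
      rw [Sat, IH _ (by omega) (by omega)]
      simp only [Sat, LTerm.val, Function.update_self, Function.update_of_ne hvne]
      exact and_comm.trans <| mem_Ico.symm.trans (mem_attachFin (n := N + 1) _).symm

theorem phiLB_spec_general (t : ℕ) :
    (∀ (N j v : ℕ), v < 2 → ∀ α : ℕ → Fin (N + 1),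
        Sat (AStruct N) α (phiLB t j v) ↔ j ≤ (α v : ℕ)) ∧
    (∀ n m : ℕ, n < m →
        Sat (AStruct n) (fun _ => (AStruct n).bot)
          (CFormula.not (CFormula.exCnt 1 0 (phiLB t (n + 1) 0))) ∧
        ¬ Sat (AStruct m) (fun _ => (AStruct m).bot)
          (CFormula.not (CFormula.exCnt 1 0 (phiLB t (n + 1) 0)))) := by
  refine ⟨fun N j v hv α => sat_phiLB_iff t hv α, fun n m hnm => ⟨?_, ?_⟩⟩
  · rw [Sat, sat_exCnt_one_iff]
    rintro ⟨c, hc⟩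
    rw [sat_phiLB_iff t (by omega), Function.update_self] at hc
    exact absurd (Fin.isLt c) (by omega)
  · rw [Sat, sat_exCnt_one_iff, not_not]
    refine ⟨⟨n + 1, by omega⟩, ?_⟩
    exact (sat_phiLB_iff t (by omega) _).mpr le_rfl

/-- In any linear order `A_N`, an element `a` satisfies `φ_j(x_v)` if and only
if there are at least `j` elements strictly below `a` (in `A_N` the number of elements strictly
below `a` is the value of `a`); consequently, for `n < m` the sentence `φ = ¬∃x φ_{n+1}(x)`
satisfies `A_n ⊨ φ` and `A_m ⊨ ¬φ`. -/
theorem phiLB_spec (t : ℕ) (ht : 1 ≤ t) :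
    (∀ (N j v : ℕ), v < 2 → ∀ α : ℕ → Fin (N + 1),
        Sat (AStruct N) α (phiLB t j v) ↔ j ≤ (α v : ℕ)) ∧
    (∀ n m : ℕ, n < m →
        Sat (AStruct n) (fun _ => (AStruct n).bot)
          (CFormula.not (CFormula.exCnt 1 0 (phiLB t (n + 1) 0))) ∧
        ¬ Sat (AStruct m) (fun _ => (AStruct m).bot)
          (CFormula.not (CFormula.exCnt 1 0 (phiLB t (n + 1) 0)))) :=
  phiLB_spec_general t
end

section
/- Let A, B be families of interpretations with the same assignment domain, and let w be a positive integer. Then the following are equivalent: (1) Spoiler has a winning strategy in the game CS^{m,t}_w(A, B), the variant of the CS game in which the parameter k of each ∃^{≥k}- and ∀^{≥k}-move is bounded by t; (2) there is a formula φ of m-variable counting logic with counting rank at most t of size |φ| ≤ w such that (A, B) ⊨ φ. -/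
/-- `F` is a `k`-choice function on the family `A` (over the structure `S`): it assigns to every
interpretation `k` pairwise distinct elements of the universe. -/
def IsKChoice {S : LOStruct} (k : ℕ) (A : Set (ℕ → S.carrier))
    (F : (ℕ → S.carrier) → Fin k → S.carrier) : Prop :=
  ∀ α ∈ A, Function.Injective (F α)

/-- The `k`-change operation `A(F^k/j)`: each interpretation gives rise to `k` interpretations,
with the assignment of `x_j` changed according to the `k`-choice function `F`. -/
def chFam {S : LOStruct} (k : ℕ) (A : Set (ℕ → S.carrier)) (j : ℕ)
    (F : (ℕ → S.carrier) → Fin k → S.carrier) : Set (ℕ → S.carrier) :=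
  {α' | ∃ α ∈ A, ∃ i : Fin k, α' = Function.update α j (F α i)}

/-- The `k`-multiplication operation `B(*^k/j)`: for every `k`-choice function `G` on `B` a
selection (given by `sel G`) picks one of the `k` elements for each interpretation; the result
is the union over all `k`-choice functions `G` of `B(G_sel/j)`. -/
def mulFam {S : LOStruct} (k : ℕ) (B : Set (ℕ → S.carrier)) (j : ℕ)
    (sel : ((ℕ → S.carrier) → Fin k → S.carrier) → (ℕ → S.carrier) → Fin k) :
    Set (ℕ → S.carrier) :=
  {β' | ∃ G : (ℕ → S.carrier) → Fin k → S.carrier, IsKChoice k B G ∧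
        ∃ β ∈ B, β' = Function.update β j (G β (sel G β))}

/-- Some atomic formula (in the variables `x_0,…,x_{m-1}`) distinguishes the families `A`, `B`. -/
def AtomWin (m : ℕ) (SA SB : LOStruct) (A : Set (ℕ → SA.carrier))
    (B : Set (ℕ → SB.carrier)) : Prop :=
  ∃ φ : CFormula, φ.IsAtomic ∧ φ.varsLT m ∧
    (∀ α ∈ A, Sat SA α φ) ∧ (∀ β ∈ B, ¬ Sat SB β φ)

/-- Spoiler has a winning strategy in the game `CS^{m,t}_w(A,B)` (the formula-size game for
`m`-variable counting logic with counting rank bounded by `t`).  From a position `(w, A, B)`: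
* Spoiler wins immediately (at any `w ≥ 1`) if some atomic formula distinguishes `A` and `B`;
* ¬-move: the game continues from `(w-1, B, A)`;
* ∨-move: Spoiler picks `u, v ≥ 1` with `u + v = w` and covers `A = C ∪ D`; Duplicator chooses
  to continue from `(u, C, B)` or `(v, D, B)`, so Spoiler must win both;
* ∧-move: symmetric, splitting `B`;
* `∃^{≥k}`-move (with `k ≤ t`): Spoiler picks `j < m`, `k ≤ t`, a `k`-choice function `F` on `A`, and for every
  `k`-choice function `G` on `B` a selection `sel G`; the game continues from
  `(w-1, A(F^k/j), B(*^k/j))`;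
* `∀^{≥k}`-move: symmetric with the roles of `A` and `B` exchanged. -/
inductive SpoilerWinsT (m t : ℕ) :
    (SA : LOStruct) → (SB : LOStruct) → ℕ →
      Set (ℕ → SA.carrier) → Set (ℕ → SB.carrier) → Prop where
  | atom (SA SB : LOStruct) (w : ℕ) (A : Set (ℕ → SA.carrier)) (B : Set (ℕ → SB.carrier)) :
      1 ≤ w → AtomWin m SA SB A B → SpoilerWinsT m t SA SB w A B
  | neg (SA SB : LOStruct) (w : ℕ) (A : Set (ℕ → SA.carrier)) (B : Set (ℕ → SB.carrier)) :
      SpoilerWinsT m t SB SA w B A → SpoilerWinsT m t SA SB (w + 1) A B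
  | or (SA SB : LOStruct) (u v : ℕ) (A C D : Set (ℕ → SA.carrier)) (B : Set (ℕ → SB.carrier)) :
      1 ≤ u → 1 ≤ v → C ∪ D = A →
      SpoilerWinsT m t SA SB u C B → SpoilerWinsT m t SA SB v D B →
      SpoilerWinsT m t SA SB (u + v) A B
  | and (SA SB : LOStruct) (u v : ℕ) (A : Set (ℕ → SA.carrier)) (B C D : Set (ℕ → SB.carrier)) :
      1 ≤ u → 1 ≤ v → C ∪ D = B →
      SpoilerWinsT m t SA SB u A C → SpoilerWinsT m t SA SB v A D →
      SpoilerWinsT m t SA SB (u + v) A B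
  | exCnt (SA SB : LOStruct) (w : ℕ) (A : Set (ℕ → SA.carrier)) (B : Set (ℕ → SB.carrier))
      (j k : ℕ) (F : (ℕ → SA.carrier) → Fin k → SA.carrier)
      (sel : ((ℕ → SB.carrier) → Fin k → SB.carrier) → (ℕ → SB.carrier) → Fin k) :
      j < m → k ≤ t → IsKChoice k A F →
      SpoilerWinsT m t SA SB w (chFam k A j F) (mulFam k B j sel) →
      SpoilerWinsT m t SA SB (w + 1) A B
  | allCnt (SA SB : LOStruct) (w : ℕ) (A : Set (ℕ → SA.carrier)) (B : Set (ℕ → SB.carrier))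
      (j k : ℕ) (F : (ℕ → SB.carrier) → Fin k → SB.carrier)
      (sel : ((ℕ → SA.carrier) → Fin k → SA.carrier) → (ℕ → SA.carrier) → Fin k) :
      j < m → k ≤ t → IsKChoice k B F →
      SpoilerWinsT m t SA SB w (mulFam k A j sel) (chFam k B j F) →
      SpoilerWinsT m t SA SB (w + 1) A B

lemma CFormula.one_le_size : ∀ φ : CFormula, 1 ≤ φ.size := by
  intro φ
  induction φ with
  | eq _ _ => exact le_refl 1
  | lt _ _ => exact le_refl 1
  | succ _ _ => exact le_refl 1
  | not ψ ih => simp only [CFormula.size]; omega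
  | or ψ θ ih1 ih2 => simp only [CFormula.size]; omega
  | and ψ θ ih1 ih2 => simp only [CFormula.size]; omega
  | exCnt k j ψ ih => simp only [CFormula.size]; omega
  | allCnt k j ψ ih => simp only [CFormula.size]; omega

lemma CFormula.atomic_facts : ∀ φ : CFormula, φ.IsAtomic → φ.size = 1 ∧ φ.crank = 0 := by
  intro φ h
  cases φ <;> first | exact ⟨rfl, rfl⟩ | exact absurd h (by simp [CFormula.IsAtomic])

lemma SpoilerWinsT.mono {m t : ℕ} {SA SB : LOStruct} {w : ℕ}
    {A : Set (ℕ → SA.carrier)} {B : Set (ℕ → SB.carrier)}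
    (h : SpoilerWinsT m t SA SB w A B) : SpoilerWinsT m t SA SB (w + 1) A B := by
  induction h with
  | atom SA SB w A B hw hat => exact .atom _ _ _ _ _ (by omega) hat
  | neg SA SB w A B h ih => exact .neg _ _ _ _ _ ih
  | or SA SB u v A C D B hu hv hCD h1 h2 ih1 ih2 =>
      rw [show u + v + 1 = (u + 1) + v by omega]
      exact .or _ _ _ _ _ _ _ _ (by omega) hv hCD ih1 h2
  | and SA SB u v A B C D hu hv hCD h1 h2 ih1 ih2 =>
      rw [show u + v + 1 = (u + 1) + v by omega]
      exact .and _ _ _ _ _ _ _ _ (by omega) hv hCD ih1 h2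
  | exCnt SA SB w A B j k F sel hj hk hF h ih =>
      exact .exCnt _ _ _ _ _ _ _ F sel hj hk hF ih
  | allCnt SA SB w A B j k F sel hj hk hF h ih =>
      exact .allCnt _ _ _ _ _ _ _ F sel hj hk hF ih

lemma SpoilerWinsT.mono_le {m t : ℕ} {SA SB : LOStruct} {w w' : ℕ} (hww : w ≤ w')
    {A : Set (ℕ → SA.carrier)} {B : Set (ℕ → SB.carrier)}
    (h : SpoilerWinsT m t SA SB w A B) : SpoilerWinsT m t SA SB w' A B := by
  induction hww with
  | refl => exact h
  | step _ ih => exact ih.mono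

lemma fin_zero_injective {γ : Type} (f : Fin 0 → γ) : Function.Injective f :=
  fun a => a.elim0

lemma win_of_formula (m t : ℕ) :
    ∀ (φ : CFormula) (SA SB : LOStruct) (A : Set (ℕ → SA.carrier)) (B : Set (ℕ → SB.carrier)),
      φ.varsLT m → φ.crank ≤ t →
      (∀ α ∈ A, Sat SA α φ) → (∀ β ∈ B, ¬ Sat SB β φ) →
      SpoilerWinsT m t SA SB φ.size A B := by
  intro φ
  induction φ with
  | eq a b =>
      intro SA SB A B hv hc hA hB
      exact .atom _ _ _ _ _ (CFormula.one_le_size _) ⟨.eq a b, trivial, hv, hA, hB⟩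
  | lt a b =>
      intro SA SB A B hv hc hA hB
      exact .atom _ _ _ _ _ (CFormula.one_le_size _) ⟨.lt a b, trivial, hv, hA, hB⟩
  | succ a b =>
      intro SA SB A B hv hc hA hB
      exact .atom _ _ _ _ _ (CFormula.one_le_size _) ⟨.succ a b, trivial, hv, hA, hB⟩
  | not ψ ih =>
      intro SA SB A B hv hc hA hB
      exact .neg _ _ _ _ _ (ih SB SA B A hv hc
        (fun β hβ => not_not.mp (hB β hβ)) (fun α hα => hA α hα))
  | or ψ θ ih1 ih2 =>
      intro SA SB A B hv hc hA hB
      have hCD : (A ∩ {α | Sat SA α ψ}) ∪ (A ∩ {α | Sat SA α θ}) = A := by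
        apply Set.eq_of_subset_of_subset
        · exact Set.union_subset Set.inter_subset_left Set.inter_subset_left
        · intro α hα
          rcases (hA α hα : Sat SA α ψ ∨ Sat SA α θ) with h | h
          · exact Or.inl ⟨hα, h⟩
          · exact Or.inr ⟨hα, h⟩
      have h1 := ih1 SA SB (A ∩ {α | Sat SA α ψ}) B hv.1
        (le_trans (le_max_left _ _) hc) (fun α hα => hα.2)
        (fun β hβ hs => hB β hβ (Or.inl hs))
      have h2 := ih2 SA SB (A ∩ {α | Sat SA α θ}) B hv.2
        (le_trans (le_max_right _ _) hc) (fun α hα => hα.2)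
        (fun β hβ hs => hB β hβ (Or.inr hs))
      exact .or _ _ _ _ _ _ _ _ (CFormula.one_le_size ψ) (CFormula.one_le_size θ) hCD h1 h2
  | and ψ θ ih1 ih2 =>
      intro SA SB A B hv hc hA hB
      have hCD : (B ∩ {β | ¬ Sat SB β ψ}) ∪ (B ∩ {β | ¬ Sat SB β θ}) = B := by
        apply Set.eq_of_subset_of_subset
        · exact Set.union_subset Set.inter_subset_left Set.inter_subset_left
        · intro β hβ
          rcases not_and_or.mp (hB β hβ : ¬ (Sat SB β ψ ∧ Sat SB β θ)) with h | h
          · exact Or.inl ⟨hβ, h⟩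
          · exact Or.inr ⟨hβ, h⟩
      have h1 := ih1 SA SB A (B ∩ {β | ¬ Sat SB β ψ}) hv.1
        (le_trans (le_max_left _ _) hc) (fun α hα => (hA α hα).1) (fun β hβ => hβ.2)
      have h2 := ih2 SA SB A (B ∩ {β | ¬ Sat SB β θ}) hv.2
        (le_trans (le_max_right _ _) hc) (fun α hα => (hA α hα).2) (fun β hβ => hβ.2)
      exact .and _ _ _ _ _ _ _ _ (CFormula.one_le_size ψ) (CFormula.one_le_size θ) hCD h1 h2
  | exCnt k j ψ ih =>
      intro SA SB A B hv hc hA hB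
      rcases Nat.eq_zero_or_pos k with hk | hk
      · subst hk
        have hBe : ∀ β, β ∉ B := fun β hβ =>
          hB β hβ ⟨fun i => i.elim0, fin_zero_injective _, fun i => i.elim0⟩
        exact .atom _ _ _ _ _ (CFormula.one_le_size _)
          ⟨.eq .min .min, trivial, ⟨trivial, trivial⟩, fun α _ => rfl,
            fun β hβ => (hBe β hβ).elim⟩
      · classical
        have hA' : ∀ α ∈ A, ∃ f : Fin k → SA.carrier, Function.Injective f ∧
            ∀ i, Sat SA (Function.update α j (f i)) ψ := hA
        have hsel : ∀ (G : (ℕ → SB.carrier) → Fin k → SB.carrier) (β : ℕ → SB.carrier),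
            β ∈ B → Function.Injective (G β) →
            ∃ i : Fin k, ¬ Sat SB (Function.update β j (G β i)) ψ := by
          intro G β hβ hinj
          by_contra hcon
          push_neg at hcon
          exact hB β hβ ⟨G β, hinj, hcon⟩
        refine SpoilerWinsT.exCnt SA SB ψ.size A B j k
          (fun α => if h : α ∈ A then (hA' α h).choose else fun _ => α 0)
          (fun G β => if h : β ∈ B ∧ Function.Injective (G β)
            then (hsel G β h.1 h.2).choose else ⟨0, hk⟩)
          hv.1 (le_trans (le_max_left _ _) hc) ?_ ?_
        · intro α hα
          simp only [dif_pos hα]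
          exact (hA' α hα).choose_spec.1
        · refine ih SA SB _ _ hv.2 (le_trans (le_max_right _ _) hc) ?_ ?_
          · rintro α' ⟨α, hα, i, rfl⟩
            simp only [dif_pos hα]
            exact (hA' α hα).choose_spec.2 i
          · rintro β' ⟨G, hG, β, hβ, rfl⟩
            have h : β ∈ B ∧ Function.Injective (G β) := ⟨hβ, hG β hβ⟩
            simp only [dif_pos h]
            exact (hsel G β h.1 h.2).choose_spec
  | allCnt k j ψ ih =>
      intro SA SB A B hv hc hA hB
      rcases Nat.eq_zero_or_pos k with hk | hk
      · subst hk
        have hAe : ∀ α, α ∉ A := fun α hα =>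
          hA α hα ⟨fun i => i.elim0, fin_zero_injective _, fun i => i.elim0⟩
        exact .neg _ _ _ _ _ (.atom _ _ ψ.size _ _ (CFormula.one_le_size ψ)
          ⟨.eq .min .min, trivial, ⟨trivial, trivial⟩, fun β _ => rfl,
            fun α hα => (hAe α hα).elim⟩)
      · classical
        have hB' : ∀ β ∈ B, ∃ f : Fin k → SB.carrier, Function.Injective f ∧
            ∀ i, ¬ Sat SB (Function.update β j (f i)) ψ :=
          fun β hβ => not_not.mp (hB β hβ)
        have hsel : ∀ (G : (ℕ → SA.carrier) → Fin k → SA.carrier) (α : ℕ → SA.carrier),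
            α ∈ A → Function.Injective (G α) →
            ∃ i : Fin k, Sat SA (Function.update α j (G α i)) ψ := by
          intro G α hα hinj
          by_contra hcon
          push_neg at hcon
          exact hA α hα ⟨G α, hinj, hcon⟩
        refine SpoilerWinsT.allCnt SA SB ψ.size A B j k
          (fun β => if h : β ∈ B then (hB' β h).choose else fun _ => β 0)
          (fun G α => if h : α ∈ A ∧ Function.Injective (G α)
            then (hsel G α h.1 h.2).choose else ⟨0, hk⟩)
          hv.1 (le_trans (le_max_left _ _) hc) ?_ ?_
        · intro β hβ
          simp only [dif_pos hβ]
          exact (hB' β hβ).choose_spec.1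
        · refine ih SA SB _ _ hv.2 (le_trans (le_max_right _ _) hc) ?_ ?_
          · rintro α' ⟨G, hG, α, hα, rfl⟩
            have h : α ∈ A ∧ Function.Injective (G α) := ⟨hα, hG α hα⟩
            simp only [dif_pos h]
            exact (hsel G α h.1 h.2).choose_spec
          · rintro β' ⟨β, hβ, i, rfl⟩
            simp only [dif_pos hβ]
            exact (hB' β hβ).choose_spec.2 i

/-- Let `A`, `B` be families of interpretations and `w` a positive integer.
Spoiler has a winning strategy in `CS^{m,t}_w(A,B)` (the variant of the CS game in which the
parameter `k` of each `∃^{≥k}`- and `∀^{≥k}`-move is bounded by `t`) iff there is a formula `φ`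
of `m`-variable counting logic with counting rank at most `t` of size `≤ w` with `(A, B) ⊨ φ`. -/
theorem CS_game_characterization_bounded_rank (m t w : ℕ) (hw : 1 ≤ w) (SA SB : LOStruct)
    (A : Set (ℕ → SA.carrier)) (B : Set (ℕ → SB.carrier)) :
    SpoilerWinsT m t SA SB w A B ↔
      ∃ φ : CFormula, φ.varsLT m ∧ φ.crank ≤ t ∧ φ.size ≤ w ∧
        (∀ α ∈ A, Sat SA α φ) ∧ (∀ β ∈ B, ¬ Sat SB β φ) := by
  constructor
  · intro h
    clear hw
    induction h with
    | atom SA SB w A B hw hat =>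
        obtain ⟨φ, hato, hv, hA, hB⟩ := hat
        obtain ⟨hs, hcr⟩ := CFormula.atomic_facts φ hato
        exact ⟨φ, hv, by omega, by omega, hA, hB⟩
    | neg SA SB w A B h ih =>
        obtain ⟨φ, hv, hc, hs, hA, hB⟩ := ih
        refine ⟨.not φ, hv, hc, ?_, fun α hα => hB α hα, fun β hβ hn => hn (hA β hβ)⟩
        simp [CFormula.size]; omega
    | or SA SB u v A C D B hu hv hCD h1 h2 ih1 ih2 =>
        obtain ⟨φ, hv1, hc1, hs1, hA1, hB1⟩ := ih1
        obtain ⟨ψ, hv2, hc2, hs2, hA2, hB2⟩ := ih2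
        refine ⟨.or φ ψ, ⟨hv1, hv2⟩, max_le hc1 hc2, ?_, ?_, ?_⟩
        · simp [CFormula.size]; omega
        · intro α hα
          rcases hCD ▸ hα with h | h
          · exact Or.inl (hA1 α h)
          · exact Or.inr (hA2 α h)
        · intro β hβ hs
          rcases hs with h | h
          · exact hB1 β hβ h
          · exact hB2 β hβ h
    | and SA SB u v A B C D hu hv hCD h1 h2 ih1 ih2 =>
        obtain ⟨φ, hv1, hc1, hs1, hA1, hB1⟩ := ih1
        obtain ⟨ψ, hv2, hc2, hs2, hA2, hB2⟩ := ih2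
        refine ⟨.and φ ψ, ⟨hv1, hv2⟩, max_le hc1 hc2, ?_, fun α hα => ⟨hA1 α hα, hA2 α hα⟩, ?_⟩
        · simp [CFormula.size]; omega
        · intro β hβ hs
          rcases hCD ▸ hβ with h | h
          · exact hB1 β h hs.1
          · exact hB2 β h hs.2
    | exCnt SA SB w A B j k F sel hj hk hF h ih =>
        obtain ⟨φ, hvφ, hcφ, hsφ, hAφ, hBφ⟩ := ih
        refine ⟨.exCnt k j φ, ⟨hj, hvφ⟩, max_le hk hcφ, ?_, ?_, ?_⟩
        · simp [CFormula.size]; omega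
        · intro α hα
          exact ⟨F α, hF α hα, fun i => hAφ _ ⟨α, hα, i, rfl⟩⟩
        · rintro β hβ ⟨f, hfinj, hfsat⟩
          exact hBφ _ ⟨fun _ => f, fun _ _ => hfinj, β, hβ, rfl⟩
            (hfsat (sel (fun _ => f) β))
    | allCnt SA SB w A B j k F sel hj hk hF h ih =>
        obtain ⟨φ, hvφ, hcφ, hsφ, hAφ, hBφ⟩ := ih
        refine ⟨.allCnt k j φ, ⟨hj, hvφ⟩, max_le hk hcφ, ?_, ?_, ?_⟩
        · simp [CFormula.size]; omega
        · rintro α hα ⟨f, hfinj, hffail⟩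
          exact hffail (sel (fun _ => f) α)
            (hAφ _ ⟨fun _ => f, fun _ _ => hfinj, α, hα, rfl⟩)
        · intro β hβ hcon
          exact hcon ⟨F β, hF β hβ, fun i => hBφ _ ⟨β, hβ, i, rfl⟩⟩
  · rintro ⟨φ, hv, hc, hs, hA, hB⟩
    exact (win_of_formula m t φ SA SB A B hv hc hA hB).mono_le hs
end
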